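/- There exists a real constant C such that for every natural number n ≥ 1, setting p = (2/(n√π)) · Γ((n+1)/2)/Γ(n/2) (which lies in (0,1)), the entropy of the geometric distribution with parameter p satisfies log₂(1/p) + ((1−p)/p) · log₂(1/(1−p)) ≤ (1/2)·log₂(n) + C. Consequently, taking n = 2d² − 1, the average number of bits of communication in the rejection-sampling protocol for simulating TBO correlations on a bipartite qudit pair of local dimension d is at most log₂(d) + O(1). -/

import Mathlib

/-!
Log-convexity of `Γ` pins the ratio `r = Γ(x + 1/2) / Γ(x)` between `x / √(x + 1/2)` and `√x`
(Gautschi-type bounds), so with `x = n/2` the acceptance probability `p = 2r / (n√π)` satisfies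
`2 / (π(n+1)) ≤ p² ≤ 2 / (πn)`. Hence `p < 1` and `log₂(1/p) ≤ ½ log₂(πn)`. The remaining term
of the entropy is at most `1 / ln 2`, because `-ln(1-p) ≤ p / (1-p)`.
-/

open Real

/-- The acceptance probability of one round of the rejection-sampling protocol
on the unit sphere `S^n ⊆ ℝ^{n+1}`. -/
noncomputable def acceptProb (n : ℕ) : ℝ :=
  2 / (n * Real.sqrt Real.pi) * (Real.Gamma ((n + 1 : ℝ) / 2) / Real.Gamma ((n : ℝ) / 2))

/-- The Shannon entropy (in bits) of the geometric distribution with parameter `p`,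
i.e. the average number of bits needed to communicate the accepting iteration. -/
noncomputable def geomEntropy (p : ℝ) : ℝ :=
  Real.logb 2 (1 / p) + ((1 - p) / p) * Real.logb 2 (1 / (1 - p))

lemma Gamma_midpoint_sq_le {s t : ℝ} (hs : 0 < s) (ht : 0 < t) :
    Gamma ((s + t) / 2) ^ 2 ≤ Gamma s * Gamma t := by
  have h := Gamma_mul_add_mul_le_rpow_Gamma_mul_rpow_Gamma hs ht one_half_pos one_half_pos
    (add_halves 1)
  rw [← sqrt_eq_rpow, ← sqrt_eq_rpow, ← sqrt_mul (Gamma_pos_of_pos hs).le,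
    show 1 / 2 * s + 1 / 2 * t = (s + t) / 2 by ring] at h
  calc Gamma ((s + t) / 2) ^ 2
      ≤ √(Gamma s * Gamma t) ^ 2 := pow_le_pow_left₀ (Gamma_pos_of_pos (by positivity)).le h 2
    _ = Gamma s * Gamma t :=
        sq_sqrt (mul_nonneg (Gamma_pos_of_pos hs).le (Gamma_pos_of_pos ht).le)

lemma Gamma_add_half_div_sq_le {x : ℝ} (hx : 0 < x) :
    (Gamma (x + 1 / 2) / Gamma x) ^ 2 ≤ x := by
  have hΓ := Gamma_pos_of_pos hx
  have h := Gamma_midpoint_sq_le hx (by positivity : 0 < x + 1)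
  rw [show (x + (x + 1)) / 2 = x + 1 / 2 by ring, Gamma_add_one hx.ne'] at h
  rw [div_pow, div_le_iff₀ (by positivity)]
  linarith

lemma sq_div_le_Gamma_add_half_div_sq {x : ℝ} (hx : 0 < x) :
    x ^ 2 / (x + 1 / 2) ≤ (Gamma (x + 1 / 2) / Gamma x) ^ 2 := by
  have hΓ := Gamma_pos_of_pos hx
  have h := Gamma_midpoint_sq_le (by positivity : 0 < x + 1 / 2) (by positivity : 0 < x + 3 / 2)
  rw [show (x + 1 / 2 + (x + 3 / 2)) / 2 = x + 1 by ring, Gamma_add_one hx.ne',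
    show x + 3 / 2 = (x + 1 / 2) + 1 by ring, Gamma_add_one (by positivity)] at h
  rw [div_pow, div_le_div_iff₀ (by positivity) (by positivity)]
  linarith

lemma geomEntropy_le {p : ℝ} (hp₀ : 0 < p) (hp₁ : p < 1) :
    geomEntropy p ≤ logb 2 (1 / p) + 1 / log 2 := by
  have hq : 0 < 1 - p := by linarith
  have hlog : log (1 / (1 - p)) ≤ p / (1 - p) := by
    have := log_le_sub_one_of_pos (one_div_pos.2 hq)
    rwa [show 1 / (1 - p) - 1 = p / (1 - p) by field_simp; ring] at this
  have hterm : (1 - p) / p * logb 2 (1 / (1 - p)) ≤ 1 / log 2 :=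
    calc (1 - p) / p * logb 2 (1 / (1 - p))
        = (1 - p) / p * log (1 / (1 - p)) / log 2 := by rw [logb, mul_div_assoc]
      _ ≤ (1 - p) / p * (p / (1 - p)) / log 2 := by gcongr
      _ = 1 / log 2 := by field_simp
  rw [geomEntropy]
  linarith

lemma acceptProb_sq (n : ℕ) :
    acceptProb n ^ 2 = 4 / (π * n ^ 2) * (Gamma (n / 2 + 1 / 2) / Gamma (n / 2)) ^ 2 := by
  rw [acceptProb, add_div, mul_pow, div_pow, mul_pow, sq_sqrt pi_pos.le]
  ring

lemma acceptProb_pos {n : ℕ} (hn : 0 < n) : 0 < acceptProb n := by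
  have : (0 : ℝ) < n := by exact_mod_cast hn
  unfold acceptProb
  have := Gamma_pos_of_pos (by positivity : (0 : ℝ) < (n + 1) / 2)
  have := Gamma_pos_of_pos (by positivity : (0 : ℝ) < n / 2)
  positivity

lemma acceptProb_sq_le {n : ℕ} (hn : 0 < n) : acceptProb n ^ 2 ≤ 2 / (π * n) := by
  have hn' : (0 : ℝ) < n := by exact_mod_cast hn
  calc acceptProb n ^ 2
      ≤ 4 / (π * n ^ 2) * (n / 2) := by
        rw [acceptProb_sq]; gcongr; exact Gamma_add_half_div_sq_le (by positivity)
    _ = 2 / (π * n) := by field_simp; ring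

lemma two_div_le_acceptProb_sq {n : ℕ} (hn : 0 < n) :
    2 / (π * (n + 1)) ≤ acceptProb n ^ 2 := by
  have hn' : (0 : ℝ) < n := by exact_mod_cast hn
  calc 2 / (π * (n + 1))
      = 4 / (π * n ^ 2) * ((n / 2) ^ 2 / (n / 2 + 1 / 2)) := by field_simp; ring
    _ ≤ acceptProb n ^ 2 := by
        rw [acceptProb_sq]; gcongr; exact sq_div_le_Gamma_add_half_div_sq (by positivity)

lemma acceptProb_lt_one {n : ℕ} (hn : 0 < n) : acceptProb n < 1 := by
  have hn' : (1 : ℝ) ≤ n := by exact_mod_cast hn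
  have hlt : 2 / (π * n) < 1 := by
    rw [div_lt_one (by positivity)]
    nlinarith [pi_gt_three]
  exact (pow_lt_one_iff_of_nonneg (acceptProb_pos hn).le two_ne_zero).1
    ((acceptProb_sq_le hn).trans_lt hlt)

lemma logb_one_div_acceptProb_le {n : ℕ} (hn : 0 < n) :
    logb 2 (1 / acceptProb n) ≤ 1 / 2 * logb 2 n + 1 / 2 * logb 2 π := by
  have hn' : (1 : ℝ) ≤ n := by exact_mod_cast hn
  have hp := acceptProb_pos hn
  have hsq : (1 / acceptProb n) ^ 2 ≤ π * n := by
    have h := two_div_le_acceptProb_sq hn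
    rw [div_le_iff₀ (by positivity)] at h
    rw [div_pow, one_pow, div_le_iff₀ (by positivity)]
    nlinarith [pi_pos]
  have hlog := (logb_le_logb one_lt_two (by positivity) (by positivity)).2 hsq
  rw [logb_pow, logb_mul pi_pos.ne' (by positivity)] at hlog
  push_cast at hlog
  linarith

lemma geomEntropy_acceptProb_le {n : ℕ} (hn : 0 < n) :
    geomEntropy (acceptProb n) ≤ 1 / 2 * logb 2 n + (1 / 2 * logb 2 π + 1 / log 2) := by
  have := geomEntropy_le (acceptProb_pos hn) (acceptProb_lt_one hn)
  linarith [logb_one_div_acceptProb_le hn]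

lemma logb_two_mul_sq_sub_one_le {d : ℕ} (hd : 0 < d) :
    logb 2 ((2 * d ^ 2 - 1 : ℕ) : ℝ) ≤ 2 * logb 2 d + 1 := by
  have hd' : (1 : ℝ) ≤ d := by exact_mod_cast hd
  have hle : ((2 * d ^ 2 - 1 : ℕ) : ℝ) ≤ 2 * (d : ℝ) ^ 2 := by
    exact_mod_cast Nat.sub_le _ _
  have hpos : (0 : ℝ) < ((2 * d ^ 2 - 1 : ℕ) : ℝ) := by
    have : 1 ≤ d ^ 2 := Nat.one_le_pow _ _ hd
    exact_mod_cast (by omega : 0 < 2 * d ^ 2 - 1)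
  calc logb 2 ((2 * d ^ 2 - 1 : ℕ) : ℝ)
      ≤ logb 2 (2 * (d : ℝ) ^ 2) := (logb_le_logb one_lt_two hpos (by positivity)).2 hle
    _ = 2 * logb 2 d + 1 := by
        rw [logb_mul two_ne_zero (by positivity), logb_self_eq_one one_lt_two, logb_pow]
        push_cast
        ring

/-- There is a constant `C` such that for all `n ≥ 1`, the average communication
of the rejection-sampling protocol on `S^n` is at most `(1/2) log₂ n + C`;
consequently, taking `n = 2d² - 1`, the average communication for simulating
TBO correlations on a bipartite qudit pair of local dimension `d` is at most
`log₂ d + O(1)`. -/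
theorem average_communication_bound :
    (∃ C : ℝ, ∀ n : ℕ, 1 ≤ n →
        0 < acceptProb n ∧ acceptProb n < 1 ∧
          geomEntropy (acceptProb n) ≤ (1 / 2) * Real.logb 2 n + C) ∧
      (∃ C : ℝ, ∀ d : ℕ, 1 ≤ d →
        geomEntropy (acceptProb (2 * d ^ 2 - 1)) ≤ Real.logb 2 d + C) := by
  refine ⟨⟨_, fun n hn => ⟨acceptProb_pos hn, acceptProb_lt_one hn, geomEntropy_acceptProb_le hn⟩⟩,
    ⟨1 / 2 + (1 / 2 * logb 2 π + 1 / log 2), fun d hd => ?_⟩⟩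
  have hn : 0 < 2 * d ^ 2 - 1 := by
    have : 1 ≤ d ^ 2 := Nat.one_le_pow _ _ hd
    omega
  linarith [geomEntropy_acceptProb_le hn, logb_two_mul_sq_sub_one_le hd]
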